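/- Let n ≥ 2, let ν : [0,∞) → [0,∞) be a strictly increasing continuous function, and let P be an n-system on a subinterval I of [0,∞). For a point a = (a_1, …, a_n) ∈ [0,∞)^n write a^ν = (ν(a_1), …, ν(a_n)). Then there is a unique n-system whose image is {P(q)^ν : q ∈ I}; moreover, its switch points (respectively, its division points) are exactly the points a^ν where a runs over the switch points (respectively, the division points) of P. -/

import Mathlib

open Filter Set Pointwise Topology

noncomputable section

/-- Points of `ℝ^n`. -/
abbrev RVec (n : ℕ) := Fin n → ℝ

/-- The vector of `ℝ^n` with a `1` in position `j` (0-based) and `0` elsewhere;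
`eVec n 0` is the first canonical basis vector `e_1`. -/
def eVec (n : ℕ) (j : ℕ) : RVec n := fun i => if (i : ℕ) = j then 1 else 0

/-- `P` is an `n`-system on the subinterval `I` of `[0,∞)`:
`I` is an order-connected subset of `[0,∞)` with nonempty interior, and conditions
(S1), (S2), (S3) hold at every `q ∈ I`. -/
def IsNSystem (n : ℕ) (I : Set ℝ) (P : ℝ → RVec n) : Prop :=
  I ⊆ Set.Ici (0 : ℝ) ∧ I.OrdConnected ∧ (interior I).Nonempty ∧
  ∀ q ∈ I,
    ((∀ i, 0 ≤ P q i) ∧ Monotone (P q) ∧ (∑ i, P q i) = q) ∧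
    ∃ ε > (0 : ℝ), ∃ k ℓ : Fin n,
      (∀ t ∈ I ∩ Set.Icc (q - ε) q, P t = P q + (t - q) • eVec n ℓ) ∧
      (∀ t ∈ I ∩ Set.Icc q (q + ε), P t = P q + (t - q) • eVec n k) ∧
      (q ∈ interior I → ℓ < k → ∀ i : Fin n, ℓ ≤ i → i ≤ k → P q i = P q ℓ)

/-- `P` is a proper `n`-system on `I`: it is an `n`-system whose first component is
unbounded (by the monotonicity (S1) of the components, this is equivalent to all
components simultaneously exceeding any given bound). -/
def IsProperSys (n : ℕ) (I : Set ℝ) (P : ℝ → RVec n) : Prop :=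
  IsNSystem n I P ∧ ∀ M : ℝ, ∃ q ∈ I, ∀ i, M < P q i

/-- The set `F(P)` of limits of `q_i⁻¹ • P(q_i)` along strictly increasing unbounded
sequences `(q_i)` in `I`. -/
def FSet (n : ℕ) (I : Set ℝ) (P : ℝ → RVec n) : Set (RVec n) :=
  {x | ∃ q : ℕ → ℝ, (∀ i, q i ∈ I) ∧ StrictMono q ∧
    Tendsto q atTop atTop ∧ Tendsto (fun i => (q i)⁻¹ • P (q i)) atTop (𝓝 x)}

/-- The set `F(P, e₁)`: as `F(P)`, but with the extra requirement that the right
derivative of `P` at each `q_i` is the first basis vector `e_1`. -/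
def FSetE1 (n : ℕ) (I : Set ℝ) (P : ℝ → RVec n) : Set (RVec n) :=
  {x | ∃ q : ℕ → ℝ, (∀ i, q i ∈ I) ∧ StrictMono q ∧ Tendsto q atTop atTop ∧
    (∀ i, ∃ ε > (0 : ℝ), ∀ t ∈ I ∩ Set.Icc (q i) (q i + ε),
      P t = P (q i) + (t - q i) • eVec n 0) ∧
    Tendsto (fun i => (q i)⁻¹ • P (q i)) atTop (𝓝 x)}

/-- `q` is a switch number of the `n`-system `P` on `I`: a point of `I` on the boundary
of `I`, or an interior point where the local slopes `e_k` (right) and `e_ℓ` (left)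
from (S2) satisfy `k < ℓ`. -/
def IsSwitchNumber (n : ℕ) (I : Set ℝ) (P : ℝ → RVec n) (q : ℝ) : Prop :=
  q ∈ I ∧ (q ∈ frontier I ∨
    (q ∈ interior I ∧ ∃ ε > (0 : ℝ), ∃ k ℓ : Fin n, k < ℓ ∧
      (∀ t ∈ I ∩ Set.Icc (q - ε) q, P t = P q + (t - q) • eVec n ℓ) ∧
      (∀ t ∈ I ∩ Set.Icc q (q + ε), P t = P q + (t - q) • eVec n k)))

/-- `q` is a division number of the `n`-system `P` on `I`: a point of `I` on the boundary
of `I`, or an interior point where `P` is not differentiable, i.e. where the left and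
right slopes from (S2) differ. -/
def IsDivisionNumber (n : ℕ) (I : Set ℝ) (P : ℝ → RVec n) (q : ℝ) : Prop :=
  q ∈ I ∧ (q ∈ frontier I ∨
    (q ∈ interior I ∧ ∃ ε > (0 : ℝ), ∃ k ℓ : Fin n, k ≠ ℓ ∧
      (∀ t ∈ I ∩ Set.Icc (q - ε) q, P t = P q + (t - q) • eVec n ℓ) ∧
      (∀ t ∈ I ∩ Set.Icc q (q + ε), P t = P q + (t - q) • eVec n k)))

/-- A non-degenerate `n`-system: an `n`-system whose domain is a closed subinterval
of `(0,∞)` and whose switch points all have `n` distinct positive coordinates. -/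
def IsNonDegenerate (n : ℕ) (I : Set ℝ) (P : ℝ → RVec n) : Prop :=
  IsNSystem n I P ∧ IsClosed I ∧ I ⊆ Set.Ioi (0 : ℝ) ∧
  ∀ q, IsSwitchNumber n I P q → (∀ i, 0 < P q i) ∧ StrictMono (P q)

/-- A rigid `n`-system of mesh `δ`: a non-degenerate `n`-system whose switch points
belong to `δℤ^n`. -/
def IsRigid (n : ℕ) (δ : ℝ) (I : Set ℝ) (P : ℝ → RVec n) : Prop :=
  IsNonDegenerate n I P ∧
  ∀ q, IsSwitchNumber n I P q → ∀ i, ∃ m : ℤ, P q i = δ * m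

/-- A self-similar system: the domain is unbounded and there is `ρ > 1` with
`P(ρq) = ρ • P(q)` for all `q` in the domain. -/
def IsSelfSimilar (n : ℕ) (I : Set ℝ) (P : ℝ → RVec n) : Prop :=
  ¬ BddAbove I ∧ ∃ ρ : ℝ, 1 < ρ ∧ ∀ q ∈ I, ρ * q ∈ I ∧ P (ρ * q) = ρ • P q

/-- The cube `[-ε, ε]^n`. -/
def cubeNbhd (n : ℕ) (ε : ℝ) : Set (RVec n) := {y | ∀ i, |y i| ≤ ε}

/-- The distance `dist(E, F)`: the infimum of all `ε > 0` such that
`E ⊆ F + [-ε,ε]^n` and `F ⊆ E + [-ε,ε]^n`. -/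
def cubeDist (n : ℕ) (E F : Set (RVec n)) : ℝ :=
  sInf {ε : ℝ | 0 < ε ∧ E ⊆ F + cubeNbhd n ε ∧ F ⊆ E + cubeNbhd n ε}

/-- `μ_T(P)`: the point of `ℝ^m` whose `j`-th coordinate is
`liminf_{q → ∞, q ∈ I} T_j(P(q))/q`. -/
def muT (n m : ℕ) (T : RVec n → RVec m) (I : Set ℝ) (P : ℝ → RVec n) : RVec m :=
  fun j => Filter.liminf (fun q => T (P q) j / q) (atTop ⊓ 𝓟 I)

/-- `liminf` of a sequence of subsets of `ℝ^n`: the set of limits of convergent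
sequences `(x_i)` with `x_i ∈ F i` for every `i`. -/
def setLiminf (n : ℕ) (F : ℕ → Set (RVec n)) : Set (RVec n) :=
  {x | ∃ y : ℕ → RVec n, (∀ i, y i ∈ F i) ∧ Tendsto y atTop (𝓝 x)}

/-- `limsup` of a sequence of subsets of `ℝ^n`: the set of accumulation points of
sequences `(x_i)` with `x_i ∈ F i` for every `i`, i.e. limits of convergent
subsequences. -/
def setLimsup (n : ℕ) (F : ℕ → Set (RVec n)) : Set (RVec n) :=
  {x | ∃ (y : ℕ → RVec n) (φ : ℕ → ℕ), (∀ i, y i ∈ F i) ∧ StrictMono φ ∧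
    Tendsto (y ∘ φ) atTop (𝓝 x)}

/-!
Reparametrize by `s(q) = ∑ ν(P_i(q))`, the coordinate sum of `P(q)^ν`. Each coordinate of `P`
is nondecreasing, so `s` is continuous and strictly increasing, and `Q := P^ν ∘ s⁻¹` is defined
on the interval `s(I)`. Where `P` moves along `e_k` only its `k`-th coordinate changes, hence so
does the `k`-th coordinate of `P^ν`, and its coordinate sum is `s`: thus `Q` moves along the same
`e_k` at the corresponding point. So `Q` is an `n`-system with the same left and right slopes as
`P` at corresponding interior points, which transfers switch and division numbers. Uniqueness
holds because an `n`-system is determined by its image: the parameter of a point is its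
coordinate sum.
-/

open Function

section Slopes

variable {n : ℕ}

theorem eVec_eq_single (k : Fin n) : eVec n k = Pi.single k 1 := by
  ext i
  simp [eVec, Pi.single_apply, Fin.val_eq_val]

theorem map_eq_add_smul_eVec (ν : ℝ → ℝ) {a b : RVec n} {k : Fin n} {c : ℝ}
    (h : b = a + c • eVec n k) :
    (fun i => ν (b i)) = (fun i => ν (a i)) + (∑ i, ν (b i) - ∑ i, ν (a i)) • eVec n k := by
  have hoff : ∀ i ≠ k, b i = a i := fun i hi => by simp [h, eVec_eq_single, hi]
  have hsum : ∑ i, ν (b i) - ∑ i, ν (a i) = ν (b k) - ν (a k) := by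
    rw [← Finset.sum_sub_distrib,
      Finset.sum_eq_single k (fun i _ hi => by rw [hoff i hi, sub_self]) (by simp)]
  ext i
  rcases eq_or_ne i k with rfl | hi
  · simp [hsum, eVec_eq_single]
  · simp [hoff i hi, eVec_eq_single, hi]

def HasSlopeOn (S : Set ℝ) (P : ℝ → RVec n) (q : ℝ) (k : Fin n) : Prop :=
  ∀ t ∈ S, P t = P q + (t - q) • eVec n k

def HasSlopesAt (I : Set ℝ) (P : ℝ → RVec n) (q : ℝ) (r : Fin n → Fin n → Prop) : Prop :=
  ∃ ε > (0 : ℝ), ∃ k ℓ : Fin n, r k ℓ ∧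
    HasSlopeOn (I ∩ Icc (q - ε) q) P q ℓ ∧ HasSlopeOn (I ∩ Icc q (q + ε)) P q k

/-- `IsSwitchNumber n I P` and `IsDivisionNumber n I P` are `IsSlopeNumber I P r` for
`r = (· < ·)` and `r = (· ≠ ·)`. -/
def IsSlopeNumber (I : Set ℝ) (P : ℝ → RVec n) (r : Fin n → Fin n → Prop) (q : ℝ) : Prop :=
  q ∈ I ∧ (q ∈ frontier I ∨ (q ∈ interior I ∧ HasSlopesAt I P q r))

variable {S T : Set ℝ} {P : ℝ → RVec n} {q : ℝ} {k k' : Fin n}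

theorem HasSlopeOn.mono (h : HasSlopeOn S P q k) (hTS : T ⊆ S) : HasSlopeOn T P q k :=
  fun t ht => h t (hTS ht)

theorem HasSlopeOn.continuousWithinAt (h : HasSlopeOn S P q k) : ContinuousWithinAt P S q := by
  have : Continuous fun t => P q + (t - q) • eVec n k := by fun_prop
  exact this.continuousWithinAt.congr h (by simp)

theorem HasSlopeOn.eq_of_mem_of_ne (h : HasSlopeOn S P q k) (h' : HasSlopeOn T P q k')
    {t : ℝ} (htS : t ∈ S) (htT : t ∈ T) (htq : t ≠ q) : k = k' := by
  by_contra hne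
  have := congrFun ((h t htS).symm.trans (h' t htT)) k
  simp [eVec_eq_single, hne, sub_eq_zero, htq] at this

theorem exists_mem_Ioc_of_mem_interior {J : Set ℝ} {x ε : ℝ} (hx : x ∈ interior J)
    (hε : 0 < ε) : ∃ t ∈ J, t ∈ Ioc x (x + ε) :=
  Filter.nonempty_of_mem (inter_mem (mem_nhdsWithin_of_mem_nhds (mem_interior_iff_mem_nhds.1 hx))
    (mem_of_superset (Ioo_mem_nhdsGT (by linarith : x < x + ε)) Ioo_subset_Ioc_self))

theorem exists_mem_Ico_of_mem_interior {J : Set ℝ} {x ε : ℝ} (hx : x ∈ interior J)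
    (hε : 0 < ε) : ∃ t ∈ J, t ∈ Ico (x - ε) x :=
  Filter.nonempty_of_mem (inter_mem (mem_nhdsWithin_of_mem_nhds (mem_interior_iff_mem_nhds.1 hx))
    (mem_of_superset (Ioo_mem_nhdsLT (by linarith : x - ε < x)) Ioo_subset_Ico_self))

theorem hasSlopesAt_iff_of_mem_interior {J : Set ℝ} {Q : ℝ → RVec n} {x ε : ℝ} {ℓ : Fin n}
    {r : Fin n → Fin n → Prop} (hx : x ∈ interior J) (hε : 0 < ε)
    (hl : HasSlopeOn (J ∩ Icc (x - ε) x) Q x ℓ) (hr : HasSlopeOn (J ∩ Icc x (x + ε)) Q x k) :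
    HasSlopesAt J Q x r ↔ r k ℓ := by
  refine ⟨fun ⟨ε', hε', k', ℓ', hkℓ, hl', hr'⟩ => ?_, fun hkℓ => ⟨ε, hε, k, ℓ, hkℓ, hl, hr⟩⟩
  have hmin := lt_min hε hε'
  obtain ⟨t, htJ, hxt, htx⟩ := exists_mem_Ioc_of_mem_interior hx hmin
  obtain ⟨u, huJ, hux, hxu⟩ := exists_mem_Ico_of_mem_interior hx hmin
  have := min_le_left ε ε'
  have := min_le_right ε ε'
  obtain rfl := hr.eq_of_mem_of_ne hr' ⟨htJ, hxt.le, by linarith⟩ ⟨htJ, hxt.le, by linarith⟩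
    hxt.ne'
  obtain rfl := hl.eq_of_mem_of_ne hl' ⟨huJ, by linarith, hxu.le⟩ ⟨huJ, by linarith, hxu.le⟩
    hxu.ne
  exact hkℓ

end Slopes

theorem Set.OrdConnected.mem_interior_iff {A : Set ℝ} (hA : A.OrdConnected) {x : ℝ} :
    x ∈ interior A ↔ ∃ a ∈ A, ∃ b ∈ A, a < x ∧ x < b := by
  refine ⟨fun hx => ?_, fun ⟨a, ha, b, hb, hax, hxb⟩ => ?_⟩
  · obtain ⟨a, ha, -, hax⟩ := exists_mem_Ico_of_mem_interior hx one_pos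
    obtain ⟨b, hb, hxb, -⟩ := exists_mem_Ioc_of_mem_interior hx one_pos
    exact ⟨a, ha, b, hb, hax, hxb⟩
  · exact mem_interior_iff_mem_nhds.2
      (mem_of_superset (Ioo_mem_nhds hax hxb) (Ioo_subset_Icc_self.trans (hA.out ha hb)))

namespace StrictMonoOn

variable {f : ℝ → ℝ} {I : Set ℝ} {q : ℝ}

theorem mem_interior_image_iff (hf : StrictMonoOn f I) (hI : I.OrdConnected)
    (hJ : (f '' I).OrdConnected) (hq : q ∈ I) : f q ∈ interior (f '' I) ↔ q ∈ interior I := by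
  rw [hJ.mem_interior_iff, hI.mem_interior_iff]
  constructor
  · rintro ⟨_, ⟨a, ha, rfl⟩, _, ⟨b, hb, rfl⟩, haq, hqb⟩
    exact ⟨a, ha, b, hb, (hf.lt_iff_lt ha hq).1 haq, (hf.lt_iff_lt hq hb).1 hqb⟩
  · rintro ⟨a, ha, b, hb, haq, hqb⟩
    exact ⟨f a, mem_image_of_mem f ha, f b, mem_image_of_mem f hb, hf ha hq haq, hf hq hb hqb⟩

theorem exists_image_inter_Icc_subset_right (hf : StrictMonoOn f I) (hI : I.OrdConnected)
    (hq : q ∈ I) {ε : ℝ} (hε : 0 < ε) :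
    ∃ δ > 0, f '' I ∩ Icc (f q) (f q + δ) ⊆ f '' (I ∩ Icc q (q + ε)) := by
  by_cases hqε : q + ε ∈ I
  · refine ⟨f (q + ε) - f q, sub_pos.2 (hf hq hqε (by linarith)), ?_⟩
    rintro _ ⟨⟨t, ht, rfl⟩, hqt, htε⟩
    exact ⟨t, ⟨ht, (hf.le_iff_le hq ht).1 hqt, (hf.le_iff_le ht hqε).1 (by linarith)⟩, rfl⟩
  · refine ⟨1, one_pos, ?_⟩
    rintro _ ⟨⟨t, ht, rfl⟩, hqt, -⟩
    have hqt := (hf.le_iff_le hq ht).1 hqt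
    refine ⟨t, ⟨ht, hqt, ?_⟩, rfl⟩
    by_contra! htε
    exact hqε (hI.out hq ht ⟨by linarith, htε.le⟩)

theorem exists_image_inter_Icc_subset_left (hf : StrictMonoOn f I) (hI : I.OrdConnected)
    (hq : q ∈ I) {ε : ℝ} (hε : 0 < ε) :
    ∃ δ > 0, f '' I ∩ Icc (f q - δ) (f q) ⊆ f '' (I ∩ Icc (q - ε) q) := by
  by_cases hqε : q - ε ∈ I
  · refine ⟨f q - f (q - ε), sub_pos.2 (hf hqε hq (by linarith)), ?_⟩
    rintro _ ⟨⟨t, ht, rfl⟩, hεt, htq⟩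
    exact ⟨t, ⟨ht, (hf.le_iff_le hqε ht).1 (by linarith), (hf.le_iff_le ht hq).1 htq⟩, rfl⟩
  · refine ⟨1, one_pos, ?_⟩
    rintro _ ⟨⟨t, ht, rfl⟩, -, htq⟩
    have htq := (hf.le_iff_le ht hq).1 htq
    refine ⟨t, ⟨ht, ?_, htq⟩, rfl⟩
    by_contra! htε
    exact hqε (hI.out ht hq ⟨htε.le, by linarith⟩)

end StrictMonoOn

namespace IsNSystem

variable {n : ℕ} {I : Set ℝ} {P : ℝ → RVec n} {q : ℝ}

theorem nonneg (hP : IsNSystem n I P) (hq : q ∈ I) (i : Fin n) : 0 ≤ P q i :=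
  (hP.2.2.2 q hq).1.1 i

theorem monotone (hP : IsNSystem n I P) (hq : q ∈ I) : Monotone (P q) :=
  (hP.2.2.2 q hq).1.2.1

theorem sum_eq (hP : IsNSystem n I P) (hq : q ∈ I) : ∑ i, P q i = q :=
  (hP.2.2.2 q hq).1.2.2

theorem exists_slopes (hP : IsNSystem n I P) (hq : q ∈ I) :
    ∃ ε > (0 : ℝ), ∃ k ℓ : Fin n,
      HasSlopeOn (I ∩ Icc (q - ε) q) P q ℓ ∧ HasSlopeOn (I ∩ Icc q (q + ε)) P q k := by
  obtain ⟨-, ε, hε, k, ℓ, hl, hr, -⟩ := hP.2.2.2 q hq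
  exact ⟨ε, hε, k, ℓ, hl, hr⟩

theorem continuousOn (hP : IsNSystem n I P) : ContinuousOn P I := by
  intro q hq
  obtain ⟨ε, hε, k, ℓ, hl, hr⟩ := hP.exists_slopes hq
  have hunion : (I ∩ Icc (q - ε) q) ∪ (I ∩ Icc q (q + ε)) = I ∩ Icc (q - ε) (q + ε) := by
    rw [← inter_union_distrib_left, Icc_union_Icc_eq_Icc (by linarith) (by linarith)]
  have hnhds : Icc (q - ε) (q + ε) ∈ 𝓝 q := Icc_mem_nhds (by linarith) (by linarith)
  rw [← continuousWithinAt_inter hnhds, ← hunion]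
  exact hl.continuousWithinAt.union hr.continuousWithinAt

theorem monotoneOn_apply (hP : IsNSystem n I P) (i : Fin n) : MonotoneOn (fun t => P t i) I := by
  intro a ha b hb hab
  have habI : Icc a b ⊆ I := hP.2.1.out ha hb
  have hclosed : IsClosed ({t | P a i ≤ P t i} ∩ Icc a b) := by
    rw [inter_comm]
    exact ((continuous_apply i).comp_continuousOn (hP.continuousOn.mono habI))
      |>.preimage_isClosed_of_isClosed isClosed_Icc isClosed_Ici
  refine hclosed.Icc_subset_of_forall_mem_nhdsWithin (le_refl (P a i))
    (fun x ⟨hax, hx⟩ => ?_) ⟨hab, le_rfl⟩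
  obtain ⟨ε, hε, k, -, -, hr⟩ := hP.exists_slopes (habI (Ico_subset_Icc_self hx))
  filter_upwards [Ioo_mem_nhdsGT (lt_min hx.2 (by linarith : x < x + ε))] with t ⟨hxt, htm⟩
  have htI : t ∈ I := habI ⟨by linarith [hx.1], htm.le.trans (min_le_left _ _)⟩
  have hPt := congrFun (hr t ⟨htI, hxt.le, htm.le.trans (min_le_right _ _)⟩) i
  have hstep : 0 ≤ (t - x) * eVec n k i :=
    mul_nonneg (by linarith) (by unfold eVec; split_ifs <;> norm_num)
  simp only [Pi.add_apply, Pi.smul_apply, smul_eq_mul] at hPt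
  show P a i ≤ P t i
  linarith [show P a i ≤ P x i from hax]

theorem eq_of_image_eq {J J' : Set ℝ} {Q Q' : ℝ → RVec n} (hQ : IsNSystem n J Q)
    (hQ' : IsNSystem n J' Q') (h : Q' '' J' = Q '' J) : J' = J ∧ EqOn Q' Q J := by
  have hparam : ∀ t' ∈ J', ∀ t ∈ J, Q' t' = Q t → t' = t := fun t' ht' t ht he => by
    rw [← hQ'.sum_eq ht', he, hQ.sum_eq ht]
  have hJJ' : ∀ t ∈ J, t ∈ J' ∧ Q' t = Q t := fun t ht => by
    obtain ⟨t', ht', he⟩ : Q t ∈ Q' '' J' := h ▸ mem_image_of_mem Q ht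
    obtain rfl := hparam t' ht' t ht he
    exact ⟨ht', he⟩
  refine ⟨Subset.antisymm (fun t' ht' => ?_) fun t ht => (hJJ' t ht).1, fun t ht => (hJJ' t ht).2⟩
  obtain ⟨t, ht, he⟩ : Q' t' ∈ Q '' J := h ▸ mem_image_of_mem Q' ht'
  rwa [hparam t' ht' t ht he.symm]

end IsNSystem

def nuReparam {n : ℕ} (ν : ℝ → ℝ) (P : ℝ → RVec n) (q : ℝ) : ℝ := ∑ i, ν (P q i)

namespace IsNSystem

variable {n : ℕ} {ν : ℝ → ℝ} {I : Set ℝ} {P Q : ℝ → RVec n} {q : ℝ}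

theorem strictMonoOn_nuReparam (hP : IsNSystem n I P) (hν : StrictMonoOn ν (Ici 0)) :
    StrictMonoOn (nuReparam ν P) I := by
  intro a ha b hb hab
  obtain ⟨j, -, hj⟩ : ∃ j ∈ Finset.univ, P a j < P b j :=
    Finset.exists_lt_of_sum_lt (by rwa [hP.sum_eq ha, hP.sum_eq hb])
  refine Finset.sum_lt_sum (fun i _ => ?_) ⟨j, Finset.mem_univ j, ?_⟩
  · exact hν.monotoneOn (hP.nonneg ha i) (hP.nonneg hb i) (hP.monotoneOn_apply i ha hb hab.le)
  · exact hν (hP.nonneg ha j) (hP.nonneg hb j) hj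

theorem continuousOn_nuReparam (hP : IsNSystem n I P) (hν : ContinuousOn ν (Ici 0)) :
    ContinuousOn (nuReparam ν P) I :=
  continuousOn_finsetSum _ fun i _ =>
    hν.comp ((continuous_apply i).comp_continuousOn hP.continuousOn) fun _ ht => hP.nonneg ht i

theorem ordConnected_image_nuReparam (hP : IsNSystem n I P) (hν : ContinuousOn ν (Ici 0)) :
    (nuReparam ν P '' I).OrdConnected :=
  (hP.2.1.isPreconnected.image _ (hP.continuousOn_nuReparam hν)).ordConnected

theorem nuReparam_mem_interior_iff (hP : IsNSystem n I P) (hνm : StrictMonoOn ν (Ici 0))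
    (hνc : ContinuousOn ν (Ici 0)) (hq : q ∈ I) :
    nuReparam ν P q ∈ interior (nuReparam ν P '' I) ↔ q ∈ interior I :=
  (hP.strictMonoOn_nuReparam hνm).mem_interior_image_iff hP.2.1
    (hP.ordConnected_image_nuReparam hνc) hq

theorem hasSlopeOn_image_nuReparam (hQ : ∀ q ∈ I, Q (nuReparam ν P q) = fun i => ν (P q i))
    {S : Set ℝ} (hSI : S ⊆ I) (hq : q ∈ I) {k : Fin n} (h : HasSlopeOn S P q k) :
    HasSlopeOn (nuReparam ν P '' S) Q (nuReparam ν P q) k := by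
  rintro _ ⟨t, ht, rfl⟩
  rw [hQ t (hSI ht), hQ q hq]
  exact map_eq_add_smul_eVec ν (h t ht)

theorem exists_slopes_nuReparam (hP : IsNSystem n I P) (hν : StrictMonoOn ν (Ici 0))
    (hQ : ∀ q ∈ I, Q (nuReparam ν P q) = fun i => ν (P q i)) (hq : q ∈ I) {ε : ℝ} (hε : 0 < ε)
    {k ℓ : Fin n} (hl : HasSlopeOn (I ∩ Icc (q - ε) q) P q ℓ)
    (hr : HasSlopeOn (I ∩ Icc q (q + ε)) P q k) :
    ∃ δ > (0 : ℝ),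
      HasSlopeOn (nuReparam ν P '' I ∩ Icc (nuReparam ν P q - δ) (nuReparam ν P q)) Q
        (nuReparam ν P q) ℓ ∧
      HasSlopeOn (nuReparam ν P '' I ∩ Icc (nuReparam ν P q) (nuReparam ν P q + δ)) Q
        (nuReparam ν P q) k := by
  have hs := hP.strictMonoOn_nuReparam hν
  obtain ⟨δ₁, hδ₁, hsub₁⟩ := hs.exists_image_inter_Icc_subset_left hP.2.1 hq hε
  obtain ⟨δ₂, hδ₂, hsub₂⟩ := hs.exists_image_inter_Icc_subset_right hP.2.1 hq hε
  have := min_le_left δ₁ δ₂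
  have := min_le_right δ₁ δ₂
  refine ⟨min δ₁ δ₂, lt_min hδ₁ hδ₂, ?_, ?_⟩
  · refine (hasSlopeOn_image_nuReparam hQ inter_subset_left hq hl).mono
      ((inter_subset_inter_right _ (Icc_subset_Icc_left ?_)).trans hsub₁)
    linarith
  · refine (hasSlopeOn_image_nuReparam hQ inter_subset_left hq hr).mono
      ((inter_subset_inter_right _ (Icc_subset_Icc_right ?_)).trans hsub₂)
    linarith

theorem of_comp_nuReparam (hP : IsNSystem n I P) (hνm : StrictMonoOn ν (Ici 0))
    (hνc : ContinuousOn ν (Ici 0)) (hν₀ : ∀ a : ℝ, 0 ≤ a → 0 ≤ ν a)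
    (hQ : ∀ q ∈ I, Q (nuReparam ν P q) = fun i => ν (P q i)) :
    IsNSystem n (nuReparam ν P '' I) Q := by
  refine ⟨?_, hP.ordConnected_image_nuReparam hνc, ?_, ?_⟩
  · rintro _ ⟨q, hq, rfl⟩
    exact Finset.sum_nonneg fun i _ => hν₀ _ (hP.nonneg hq i)
  · obtain ⟨q, hq⟩ := hP.2.2.1
    exact ⟨_, (hP.nuReparam_mem_interior_iff hνm hνc (interior_subset hq)).2 hq⟩
  rintro _ ⟨q, hq, rfl⟩
  obtain ⟨-, ε, hε, k, ℓ, hl, hr, hS3⟩ := hP.2.2.2 q hq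
  obtain ⟨δ, hδ, hl', hr'⟩ := hP.exists_slopes_nuReparam hνm hQ hq hε hl hr
  refine ⟨?_, δ, hδ, k, ℓ, hl', hr', fun hint hℓk i hℓi hik => ?_⟩
  · rw [hQ q hq]
    refine ⟨fun i => hν₀ _ (hP.nonneg hq i), fun i j hij => ?_, rfl⟩
    exact hνm.monotoneOn (hP.nonneg hq i) (hP.nonneg hq j) (hP.monotone hq hij)
  · rw [hQ q hq]
    exact congrArg ν (hS3 ((hP.nuReparam_mem_interior_iff hνm hνc hq).1 hint) hℓk i hℓi hik)

theorem isSlopeNumber_nuReparam_iff (hP : IsNSystem n I P) (hνm : StrictMonoOn ν (Ici 0))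
    (hνc : ContinuousOn ν (Ici 0)) (hQ : ∀ q ∈ I, Q (nuReparam ν P q) = fun i => ν (P q i))
    (hq : q ∈ I) (r : Fin n → Fin n → Prop) :
    IsSlopeNumber (nuReparam ν P '' I) Q r (nuReparam ν P q) ↔ IsSlopeNumber I P r q := by
  have hsq : nuReparam ν P q ∈ nuReparam ν P '' I := mem_image_of_mem _ hq
  simp only [IsSlopeNumber, mem_frontier_iff_notMem_interior hsq,
    mem_frontier_iff_notMem_interior hq, hP.nuReparam_mem_interior_iff hνm hνc hq, hq, hsq,
    true_and]
  refine or_congr_right (and_congr_right fun hint => ?_)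
  obtain ⟨ε, hε, k, ℓ, hl, hr⟩ := hP.exists_slopes hq
  obtain ⟨δ, hδ, hl', hr'⟩ := hP.exists_slopes_nuReparam hνm hQ hq hε hl hr
  rw [hasSlopesAt_iff_of_mem_interior hint hε hl hr, hasSlopesAt_iff_of_mem_interior
    ((hP.nuReparam_mem_interior_iff hνm hνc hq).2 hint) hδ hl' hr']

theorem setOf_isSlopeNumber_nuReparam (hP : IsNSystem n I P) (hνm : StrictMonoOn ν (Ici 0))
    (hνc : ContinuousOn ν (Ici 0)) (hQ : ∀ q ∈ I, Q (nuReparam ν P q) = fun i => ν (P q i))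
    (r : Fin n → Fin n → Prop) :
    {t | IsSlopeNumber (nuReparam ν P '' I) Q r t} =
      nuReparam ν P '' {q | IsSlopeNumber I P r q} := by
  ext t
  constructor
  · intro ht
    obtain ⟨q, hq, rfl⟩ := ht.1
    exact ⟨q, (hP.isSlopeNumber_nuReparam_iff hνm hνc hQ hq r).1 ht, rfl⟩
  · rintro ⟨q, hq, rfl⟩
    exact (hP.isSlopeNumber_nuReparam_iff hνm hνc hQ hq.1 r).2 hq

end IsNSystem

theorem exists_unique_nu_system_general (n : ℕ) (ν : ℝ → ℝ)
    (hmono : StrictMonoOn ν (Set.Ici 0)) (hcont : ContinuousOn ν (Set.Ici 0))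
    (hmaps : ∀ a : ℝ, 0 ≤ a → 0 ≤ ν a)
    (I : Set ℝ) (P : ℝ → RVec n) (hP : IsNSystem n I P) :
    ∃ (J : Set ℝ) (Q : ℝ → RVec n),
      IsNSystem n J Q ∧
      Q '' J = (fun a : RVec n => fun i => ν (a i)) '' (P '' I) ∧
      (∀ (J' : Set ℝ) (Q' : ℝ → RVec n), IsNSystem n J' Q' →
        Q' '' J' = (fun a : RVec n => fun i => ν (a i)) '' (P '' I) →
        J' = J ∧ Set.EqOn Q' Q J) ∧
      {x : RVec n | ∃ q, IsSwitchNumber n J Q q ∧ Q q = x}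
        = (fun a : RVec n => fun i => ν (a i)) ''
            {x : RVec n | ∃ q, IsSwitchNumber n I P q ∧ P q = x} ∧
      {x : RVec n | ∃ q, IsDivisionNumber n J Q q ∧ Q q = x}
        = (fun a : RVec n => fun i => ν (a i)) ''
            {x : RVec n | ∃ q, IsDivisionNumber n I P q ∧ P q = x} := by
  set s := nuReparam ν P
  have hs : InjOn s I := (hP.strictMonoOn_nuReparam hmono).injOn
  obtain ⟨Q, hQ⟩ : ∃ Q : ℝ → RVec n, ∀ q ∈ I, Q (s q) = fun i => ν (P q i) :=
    ⟨fun t i => ν (P (invFunOn s I t) i), fun q hq => by dsimp only; rw [hs.leftInvOn_invFunOn hq]⟩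
  have hQsys := hP.of_comp_nuReparam hmono hcont hmaps hQ
  have himage : ∀ S ⊆ I, Q '' (s '' S) = (fun a : RVec n => fun i => ν (a i)) '' (P '' S) :=
    fun S hS => by
      simp only [image_image]
      exact image_congr fun q hq => hQ q (hS hq)
  refine ⟨s '' I, Q, hQsys, himage I subset_rfl,
    fun J' Q' hQ' h => hQsys.eq_of_image_eq hQ' (h.trans (himage I subset_rfl).symm), ?_, ?_⟩
  · exact (congrArg (Q '' ·) (hP.setOf_isSlopeNumber_nuReparam hmono hcont hQ (· < ·))).trans
      (himage _ fun q hq => hq.1)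
  · exact (congrArg (Q '' ·) (hP.setOf_isSlopeNumber_nuReparam hmono hcont hQ (· ≠ ·))).trans
      (himage _ fun q hq => hq.1)

/-- **Proposition (the system `P^ν`).** Let `ν : [0,∞) → [0,∞)` be strictly increasing
and continuous, and let `P` be an `n`-system on `I`.  Then there is a unique `n`-system
whose image is `{P(q)^ν : q ∈ I}` (where `a^ν = (ν(a₁), …, ν(a_n))`); moreover its
switch points (resp. division points) are exactly the points `a^ν` with `a` a switch
point (resp. division point) of `P`. -/
theorem exists_unique_nu_system (n : ℕ) (hn : 2 ≤ n) (ν : ℝ → ℝ)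
    (hmono : StrictMonoOn ν (Set.Ici 0)) (hcont : ContinuousOn ν (Set.Ici 0))
    (hmaps : ∀ a : ℝ, 0 ≤ a → 0 ≤ ν a)
    (I : Set ℝ) (P : ℝ → RVec n) (hP : IsNSystem n I P) :
    ∃ (J : Set ℝ) (Q : ℝ → RVec n),
      IsNSystem n J Q ∧
      Q '' J = (fun a : RVec n => fun i => ν (a i)) '' (P '' I) ∧
      (∀ (J' : Set ℝ) (Q' : ℝ → RVec n), IsNSystem n J' Q' →
        Q' '' J' = (fun a : RVec n => fun i => ν (a i)) '' (P '' I) →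
        J' = J ∧ Set.EqOn Q' Q J) ∧
      {x : RVec n | ∃ q, IsSwitchNumber n J Q q ∧ Q q = x}
        = (fun a : RVec n => fun i => ν (a i)) ''
            {x : RVec n | ∃ q, IsSwitchNumber n I P q ∧ P q = x} ∧
      {x : RVec n | ∃ q, IsDivisionNumber n J Q q ∧ Q q = x}
        = (fun a : RVec n => fun i => ν (a i)) ''
            {x : RVec n | ∃ q, IsDivisionNumber n I P q ∧ P q = x} :=
  exists_unique_nu_system_general n ν hmono hcont hmaps I P hP
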